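/- Let X be a Hausdorff semitopological semilattice and L ⊆ X a chain order-isomorphic to (α, min) for an ordinal α. If the closure of L has no maximum element, then L is cofinal in its closure and the closure of L is order-isomorphic to (α, min). -/

import Mathlib

/-!
In a semitopological semilattice the sets `Iic s` and `Ici s` are closed, since they are the
equalisers `{x | s ⊓ x = x}` and `{x | s ⊓ x = s}`. Hence a relation `L ⊆ Iic a ∪ Ici b` passes to
the closure of `L`; in particular the closure of a chain is a chain. Since the closure has no
maximum, no point `y` of it bounds `L`, so there is a least `ψ y ∈ L` with `ψ y ≰ y`; then
`L ⊆ Iic y ∪ Ici (ψ y)`, so `ψ y` lies below every point of the closure above `y`. This makes `ψ` a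
strictly monotone map from the closure into `L` with `y ≤ ψ y`. The closure and `L` thus embed
into each other, and two well-orders that embed into each other are isomorphic.
-/

open Set

theorem OrderEmbedding.nonempty_orderIso {α β : Type*} [LinearOrder α]
    [WellFoundedLT α] [LinearOrder β] (f : α ↪o β) (g : β ↪o α) : Nonempty (α ≃o β) :=
  have : WellFoundedLT β := g.wellFoundedLT
  ⟨.ofRelIsoLT (f.ltEmbedding.collapse.antisymm g.ltEmbedding.collapse)⟩

section SemitopologicalSemilattice

variable {X : Type*} [SemilatticeInf X] [TopologicalSpace X] [T2Space X]

theorem closedIicTopology_of_continuous_inf (hcont : ∀ s : X, Continuous (s ⊓ ·)) :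
    ClosedIicTopology X where
  isClosed_Iic s := by
    simpa only [Iic, ← inf_eq_right] using isClosed_eq (hcont s) continuous_id'

theorem closedIciTopology_of_continuous_inf (hcont : ∀ s : X, Continuous (s ⊓ ·)) :
    ClosedIciTopology X where
  isClosed_Ici s := by
    simpa only [Ici, ← inf_eq_left] using isClosed_eq (hcont s) continuous_const

end SemitopologicalSemilattice

theorem IsChain.exists_least_not_le {X : Type*} [Preorder X] {L : Set X}
    [WellFoundedLT L] (hL : IsChain (· ≤ ·) L) {y : X} (hy : ∃ l ∈ L, ¬ l ≤ y) :
    ∃ m ∈ L, ¬ m ≤ y ∧ L ⊆ Iic y ∪ Ici m := by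
  obtain ⟨l, hl, hly⟩ := hy
  obtain ⟨⟨m, hm⟩, hmy, hmin⟩ :=
    wellFounded_lt.has_min {a : L | ¬ (a : X) ≤ y} ⟨⟨l, hl⟩, hly⟩
  refine ⟨m, hm, hmy, fun a ha => or_iff_not_imp_left.2 fun hay => ?_⟩
  exact hL.le_of_not_gt ha hm (hmin ⟨a, ha⟩ hay)

section ClosedIntervals

variable {X : Type*} [Preorder X] [TopologicalSpace X] [ClosedIicTopology X]
  [ClosedIciTopology X] {L : Set X}

theorem closure_subset_Iic_union_Ici {a b : X} (h : L ⊆ Iic a ∪ Ici b) :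
    closure L ⊆ Iic a ∪ Ici b :=
  closure_minimal h (isClosed_Iic.union isClosed_Ici)

theorem IsChain.subset_Iic_union_Ici_of_mem_closure (hL : IsChain (· ≤ ·) L) {y : X}
    (hy : y ∈ closure L) : L ⊆ Iic y ∪ Ici y := by
  intro l hl
  have hL_l : L ⊆ Iic l ∪ Ici l := fun _ ha => hL.total ha hl
  exact (closure_subset_Iic_union_Ici hL_l hy).symm

theorem IsChain.closure (hL : IsChain (· ≤ ·) L) : IsChain (· ≤ ·) (closure L) :=
  fun _ hy _ hz _ =>
    (closure_subset_Iic_union_Ici (hL.subset_Iic_union_Ici_of_mem_closure hy) hz).symm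

theorem exists_strictMono_closure_le_of_isChain [WellFoundedLT L] (hL : IsChain (· ≤ ·) L)
    (hunbdd : ∀ y ∈ closure L, ∃ l ∈ L, ¬ l ≤ y) :
    ∃ ψ : closure L → L, StrictMono ψ ∧ ∀ y : closure L, (y : X) ≤ ψ y := by
  choose ψ hψL hψy hψsplit using fun y : closure L => hL.exists_least_not_le
    (hunbdd y y.2)
  have below_of_lt : ∀ y z : closure L, y < z → ψ y ≤ z := fun y z hyz =>
    (closure_subset_Iic_union_Ici (hψsplit y) z.2).resolve_left hyz.not_ge
  refine ⟨fun y => ⟨ψ y, hψL y⟩, fun y z hyz => ?_, fun y => ?_⟩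
  · refine hL.lt_of_not_ge (hψL z) (hψL y) fun hzy => hψy z ?_
    exact hzy.trans (below_of_lt y z hyz)
  · exact (hL.closure.total y.2 (subset_closure (hψL y))).resolve_right (hψy y)

end ClosedIntervals

/-- Let `X` be a Hausdorff semitopological semilattice and `L` a chain order-isomorphic to
`(α, min)` for an ordinal `α`.  If the closure of `L` has no maximum element, then `L` is
cofinal in its closure and the closure of `L` is order-isomorphic to `(α, min)`. -/
theorem closure_of_ordinal_chain {X : Type*} [SemilatticeInf X] [TopologicalSpace X] [T2Space X]
    (hcont : ∀ s : X, Continuous fun x => s ⊓ x)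
    (α : Ordinal) (L : Set X)
    (hiso : Nonempty ((Set.Iio α) ≃o L))
    (hnomax : ¬ ∃ m ∈ closure L, ∀ y ∈ closure L, y ≤ m) :
    (∀ y ∈ closure L, ∃ l ∈ L, y ≤ l) ∧ Nonempty ((Set.Iio α) ≃o (closure L)) := by
  obtain ⟨e⟩ := hiso
  have := closedIicTopology_of_continuous_inf hcont
  have := closedIciTopology_of_continuous_inf hcont
  have hL : IsChain (· ≤ ·) L := fun a ha b hb _ =>
    (le_total (e.symm ⟨a, ha⟩) (e.symm ⟨b, hb⟩)).imp e.symm.le_iff_le.1 e.symm.le_iff_le.1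
  have : WellFoundedLT L := e.symm.strictMono.wellFoundedLT
  have hunbdd : ∀ y ∈ closure L, ∃ l ∈ L, ¬ l ≤ y := by
    by_contra! h
    obtain ⟨y, hy, hLy⟩ := h
    exact hnomax ⟨y, hy, fun z hz => closure_minimal hLy isClosed_Iic hz⟩
  obtain ⟨ψ, hψ, hle⟩ := exists_strictMono_closure_le_of_isChain hL hunbdd
  refine ⟨fun y hy => ⟨ψ ⟨y, hy⟩, (ψ _).2, hle ⟨y, hy⟩⟩, ?_⟩
  classical
  let := hL.closure.linearOrder
  exact OrderEmbedding.nonempty_orderIso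
    (OrderEmbedding.ofStrictMono (fun ξ => ⟨e ξ, subset_closure (e ξ).2⟩) e.strictMono)
    (OrderEmbedding.ofStrictMono (e.symm ∘ ψ) (e.symm.strictMono.comp hψ))
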